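/- There exists a universal constant C > 0 such that the following holds. Let d ≥ 1, t ≥ 1, ε > 0 with t·ε ≤ 1/2. Let Δ, Δ' ∈ Matrix (Fin d) (Fin d) ℂ be Hermitian with ‖Δ‖_F ≤ ε/√d and ‖Δ'‖_F ≤ ε/√d, and let 𝓗 be a linear map on matrices indexed by (Fin t → Fin d) satisfying ‖𝓗(X)‖_F ≤ ‖X‖_F for all X. For a Hermitian d×d matrix Γ, define the linear part L_Γ = Σ_{i ∈ Fin t} Emb_i(Γ), where Emb_i(Γ) is the matrix on (Fin t → Fin d) with entries (v,w) ↦ Γ (v i) (w i) · ∏_{a ≠ i} (1/d)·[v a = w a], and the higher-order part H_Γ = ((1/d)·1 + Γ)^{⊗t} − ((1/d)·1)^{⊗t} − L_Γ. Then |tr( L_Δ · 𝓗(H_{Δ'}) )| + |tr( H_Δ · 𝓗(L_{Δ'}) )| + |tr( H_Δ · 𝓗(H_{Δ'}) )| ≤ C · t³ · ε³ / d^t. -/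

import Mathlib

open Matrix

/-- The `t`-fold matrix tensor power `M^{⊗t}`, indexed by `Fin t → Fin d`. -/
noncomputable def tensorPowMatrix (d t : ℕ) (M : Matrix (Fin d) (Fin d) ℂ) :
    Matrix (Fin t → Fin d) (Fin t → Fin d) ℂ :=
  Matrix.of fun v w => ∏ a, M (v a) (w a)

/-- `Emb_i(Γ)`: the matrix `Γ` placed in register `i`, tensored with the maximally
mixed state `(1/d)·1` on all remaining registers. -/
noncomputable def embedAt (d t : ℕ) (i : Fin t) (Γ : Matrix (Fin d) (Fin d) ℂ) :
    Matrix (Fin t → Fin d) (Fin t → Fin d) ℂ :=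
  Matrix.of fun v w =>
    Γ (v i) (w i) * ∏ a ∈ Finset.univ.erase i, ((d : ℂ))⁻¹ * (if v a = w a then 1 else 0)

/-- The linear part `L_Γ = Σ_i Emb_i(Γ)` of the perturbation of `ρ_mm^{⊗t}`. -/
noncomputable def linPart (d t : ℕ) (Γ : Matrix (Fin d) (Fin d) ℂ) :
    Matrix (Fin t → Fin d) (Fin t → Fin d) ℂ :=
  ∑ i : Fin t, embedAt d t i Γ

/-- The higher-order part
`H_Γ = ((1/d)·1 + Γ)^{⊗t} − ((1/d)·1)^{⊗t} − L_Γ`. -/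
noncomputable def highPart (d t : ℕ) (Γ : Matrix (Fin d) (Fin d) ℂ) :
    Matrix (Fin t → Fin d) (Fin t → Fin d) ℂ :=
  tensorPowMatrix d t (((d : ℂ))⁻¹ • (1 : Matrix (Fin d) (Fin d) ℂ) + Γ) -
    tensorPowMatrix d t (((d : ℂ))⁻¹ • (1 : Matrix (Fin d) (Fin d) ℂ)) -
    linPart d t Γ

/-- The Frobenius (Hilbert–Schmidt) norm of a matrix over any finite index type. -/
noncomputable def frobNorm {I : Type*} [Fintype I] (A : Matrix I I ℂ) : ℝ :=
  Real.sqrt (∑ v, ∑ w, Complex.normSq (A v w))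

section AuxHOL
open Finset

noncomputable def toEuc {I : Type*} [Fintype I] (A : Matrix I I ℂ) :
    EuclideanSpace ℂ (I × I) :=
  (WithLp.equiv 2 _).symm (fun p => A p.1 p.2)

section FrobAux
variable {I : Type*} [Fintype I]

lemma frobNorm_nonneg (A : Matrix I I ℂ) : 0 ≤ frobNorm A := Real.sqrt_nonneg _

lemma normSq_sum_nonneg (A : Matrix I I ℂ) : 0 ≤ ∑ v, ∑ w, Complex.normSq (A v w) :=
  Finset.sum_nonneg fun _ _ => Finset.sum_nonneg fun _ _ => Complex.normSq_nonneg _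

lemma frobNorm_sq (A : Matrix I I ℂ) :
    frobNorm A ^ 2 = ∑ v, ∑ w, Complex.normSq (A v w) := by
  rw [frobNorm, Real.sq_sqrt (normSq_sum_nonneg A)]

lemma frobNorm_eq_norm (A : Matrix I I ℂ) : frobNorm A = ‖toEuc A‖ := by
  rw [EuclideanSpace.norm_eq, frobNorm, Fintype.sum_prod_type]
  refine congrArg Real.sqrt (Finset.sum_congr rfl fun v _ =>
    Finset.sum_congr rfl fun w _ => ?_)
  show Complex.normSq (A v w) = ‖A v w‖ ^ 2
  rw [Complex.normSq_eq_norm_sq]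

lemma frobNorm_sum_le {ι : Type*} (s : Finset ι) (f : ι → Matrix I I ℂ) :
    frobNorm (∑ i ∈ s, f i) ≤ ∑ i ∈ s, frobNorm (f i) := by
  have h : toEuc (∑ i ∈ s, f i) = ∑ i ∈ s, toEuc (f i) := by
    ext p
    show (∑ i ∈ s, f i) p.1 p.2 = (∑ i ∈ s, toEuc (f i)) p
    rw [WithLp.ofLp_sum, Finset.sum_apply]
    simp [Matrix.sum_apply, toEuc]
  simp only [frobNorm_eq_norm, h]
  exact norm_sum_le _ _
end FrobAux

section FrobAux2
variable {I : Type*} [Fintype I]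

lemma abs_trace_mul_le (A B : Matrix I I ℂ) :
    ‖(A * B).trace‖ ≤ frobNorm A * frobNorm B := by
  have h1 : (A * B).trace = ∑ v, ∑ w, A v w * B w v := by
    simp [Matrix.trace, Matrix.diag, Matrix.mul_apply]
  rw [h1]
  have h2 : ‖∑ v, ∑ w, A v w * B w v‖
      ≤ ∑ v, ∑ w, ‖A v w‖ * ‖B w v‖ := by
    refine (norm_sum_le _ _).trans (Finset.sum_le_sum fun v _ => ?_)
    refine (norm_sum_le _ _).trans (Finset.sum_le_sum fun w _ => le_of_eq ?_)
    exact norm_mul _ _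
  refine h2.trans ?_
  have h3 : ∑ v, ∑ w, ‖A v w‖ * ‖B w v‖
      = ∑ p : I × I, ‖A p.1 p.2‖ * ‖B p.2 p.1‖ := by
    rw [Fintype.sum_prod_type]
  rw [h3]
  have hcs := Finset.sum_mul_sq_le_sq_mul_sq Finset.univ
      (fun p : I × I => ‖A p.1 p.2‖) (fun p => ‖B p.2 p.1‖)
  have hA : ∑ p : I × I, ‖A p.1 p.2‖ ^ 2 = frobNorm A ^ 2 := by
    rw [frobNorm_sq, Fintype.sum_prod_type]
    exact Finset.sum_congr rfl fun v _ => Finset.sum_congr rfl fun w _ =>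
      (Complex.sq_norm _)
  have hB : ∑ p : I × I, ‖B p.2 p.1‖ ^ 2 = frobNorm B ^ 2 := by
    rw [frobNorm_sq, Fintype.sum_prod_type, Finset.sum_comm]
    exact Finset.sum_congr rfl fun v _ => Finset.sum_congr rfl fun w _ =>
      (Complex.sq_norm _)
  rw [hA, hB] at hcs
  have hnn : (0:ℝ) ≤ ∑ p : I × I, ‖A p.1 p.2‖ * ‖B p.2 p.1‖ :=
    Finset.sum_nonneg fun p _ => mul_nonneg (norm_nonneg _) (norm_nonneg _)
  nlinarith [frobNorm_nonneg A, frobNorm_nonneg B,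
    mul_nonneg (frobNorm_nonneg A) (frobNorm_nonneg B)]

end FrobAux2

lemma frobNorm_tensor {d t : ℕ} (f : Fin t → Matrix (Fin d) (Fin d) ℂ) :
    frobNorm (Matrix.of fun v w : Fin t → Fin d => ∏ a, f a (v a) (w a))
      = ∏ a, frobNorm (f a) := by
  have key : ∑ v : Fin t → Fin d, ∑ w : Fin t → Fin d,
        Complex.normSq (∏ a, f a (v a) (w a))
      = ∏ a, ∑ x, ∑ y, Complex.normSq (f a x y) := by
    calc ∑ v : Fin t → Fin d, ∑ w : Fin t → Fin d, Complex.normSq (∏ a, f a (v a) (w a))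
        = ∑ v : Fin t → Fin d, ∑ w : Fin t → Fin d,
            ∏ a, Complex.normSq (f a (v a) (w a)) := by
          refine Finset.sum_congr rfl fun v _ => Finset.sum_congr rfl fun w _ => ?_
          exact map_prod Complex.normSq _ _
      _ = ∑ p : (Fin t → Fin d) × (Fin t → Fin d),
            ∏ a, Complex.normSq (f a (p.1 a) (p.2 a)) := by
          rw [Fintype.sum_prod_type]
      _ = ∑ q : Fin t → Fin d × Fin d,
            ∏ a, Complex.normSq (f a (q a).1 (q a).2) := by
          exact (Fintype.sum_equiv (Equiv.arrowProdEquivProdArrow (Fin t) (fun _ => Fin d) (fun _ => Fin d))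
            _ _ (fun q => rfl)).symm
      _ = ∏ a, ∑ p : Fin d × Fin d, Complex.normSq (f a p.1 p.2) := by
          rw [Fintype.prod_sum (fun a (p : Fin d × Fin d) => Complex.normSq (f a p.1 p.2))]
      _ = ∏ a, ∑ x, ∑ y, Complex.normSq (f a x y) := by
          exact Finset.prod_congr rfl fun a _ => Fintype.sum_prod_type _
  have hT : frobNorm (Matrix.of fun v w : Fin t → Fin d => ∏ a, f a (v a) (w a))
      = Real.sqrt (∑ v : Fin t → Fin d, ∑ w : Fin t → Fin d,
          Complex.normSq (∏ a, f a (v a) (w a))) := rfl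
  rw [hT, key]
  have h2 : ∏ a, (∑ x, ∑ y, Complex.normSq (f a x y)) = (∏ a, frobNorm (f a)) ^ 2 := by
    rw [← Finset.prod_pow]
    exact Finset.prod_congr rfl fun a _ => (frobNorm_sq (f a)).symm
  rw [h2, Real.sqrt_sq (Finset.prod_nonneg fun a _ => frobNorm_nonneg _)]

noncomputable def idm (d : ℕ) : Matrix (Fin d) (Fin d) ℂ :=
  Matrix.of fun x y => ((d : ℂ))⁻¹ * (if x = y then 1 else 0)

lemma frobNorm_idm {d : ℕ} (hd : 1 ≤ d) : frobNorm (idm d) = (Real.sqrt d)⁻¹ := by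
  have hd0 : (0:ℝ) < d := by exact_mod_cast hd
  have h : ∀ x y : Fin d, Complex.normSq (idm d x y)
      = if x = y then (((d:ℝ))^2)⁻¹ else 0 := by
    intro x y
    by_cases hxy : x = y
    · simp only [idm, Matrix.of_apply, hxy, if_pos rfl, mul_one, if_true]
      rw [Complex.normSq_eq_norm_sq, norm_inv, Complex.norm_natCast, inv_pow]
    · simp [idm, hxy]
  have hsum : ∑ x : Fin d, ∑ y : Fin d, Complex.normSq (idm d x y) = ((d:ℝ))⁻¹ := by
    simp only [h]
    rw [Finset.sum_congr rfl (fun x _ => Finset.sum_ite_eq Finset.univ x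
      (fun _ => (((d:ℝ))^2)⁻¹))]
    simp only [Finset.mem_univ, if_true, Finset.sum_const, Finset.card_univ,
      Fintype.card_fin, nsmul_eq_mul]
    field_simp
  rw [frobNorm, hsum, Real.sqrt_inv]

lemma embedAt_eq {d t : ℕ} (i : Fin t) (Γ : Matrix (Fin d) (Fin d) ℂ) :
    embedAt d t i Γ = Matrix.of fun v w : Fin t → Fin d =>
      ∏ a, (if a = i then Γ else idm d) (v a) (w a) := by
  ext v w
  show Γ (v i) (w i) * ∏ a ∈ Finset.univ.erase i, ((d:ℂ))⁻¹ * (if v a = w a then 1 else 0)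
    = ∏ a, (if a = i then Γ else idm d) (v a) (w a)
  rw [← Finset.mul_prod_erase Finset.univ _ (Finset.mem_univ i)]
  congr 1
  · simp
  · refine Finset.prod_congr rfl fun a ha => ?_
    rw [if_neg (Finset.ne_of_mem_erase ha)]
    rfl

lemma frobNorm_embedAt {d t : ℕ} (hd : 1 ≤ d) (i : Fin t) (Γ : Matrix (Fin d) (Fin d) ℂ) :
    frobNorm (embedAt d t i Γ) = frobNorm Γ * ((Real.sqrt d)⁻¹) ^ (t - 1) := by
  rw [embedAt_eq, frobNorm_tensor,
    ← Finset.mul_prod_erase Finset.univ _ (Finset.mem_univ i)]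
  congr 1
  · simp
  · rw [Finset.prod_congr rfl (fun a ha => by
      rw [if_neg (Finset.ne_of_mem_erase ha), frobNorm_idm hd]),
      Finset.prod_const, Finset.card_erase_of_mem (Finset.mem_univ i),
      Finset.card_univ, Fintype.card_fin]

noncomputable def termS (d t : ℕ) (Γ : Matrix (Fin d) (Fin d) ℂ) (S : Finset (Fin t)) :
    Matrix (Fin t → Fin d) (Fin t → Fin d) ℂ :=
  Matrix.of fun v w =>
    (∏ a ∈ S, Γ (v a) (w a)) * ∏ a ∈ Sᶜ, ((d : ℂ))⁻¹ * (if v a = w a then 1 else 0)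

lemma termS_eq {d t : ℕ} (Γ : Matrix (Fin d) (Fin d) ℂ) (S : Finset (Fin t)) :
    termS d t Γ S = Matrix.of fun v w : Fin t → Fin d =>
      ∏ a, (if a ∈ S then Γ else idm d) (v a) (w a) := by
  ext v w
  show (∏ a ∈ S, Γ (v a) (w a)) * ∏ a ∈ Sᶜ, ((d:ℂ))⁻¹ * (if v a = w a then 1 else 0)
    = ∏ a, (if a ∈ S then Γ else idm d) (v a) (w a)
  rw [← Finset.prod_mul_prod_compl S (fun a => (if a ∈ S then Γ else idm d) (v a) (w a))]
  congr 1
  · exact Finset.prod_congr rfl fun a ha => by rw [if_pos ha]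
  · exact Finset.prod_congr rfl fun a ha => by
      rw [if_neg (Finset.mem_compl.1 ha)]; rfl

lemma frobNorm_termS {d t : ℕ} (hd : 1 ≤ d) (Γ : Matrix (Fin d) (Fin d) ℂ)
    (S : Finset (Fin t)) :
    frobNorm (termS d t Γ S)
      = frobNorm Γ ^ S.card * ((Real.sqrt d)⁻¹) ^ (t - S.card) := by
  rw [termS_eq, frobNorm_tensor,
    ← Finset.prod_mul_prod_compl S (fun a => frobNorm (if a ∈ S then Γ else idm d))]
  congr 1
  · rw [Finset.prod_congr rfl (fun a ha => by rw [if_pos ha]), Finset.prod_const]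
  · rw [Finset.prod_congr rfl (fun a ha => by
      rw [if_neg (Finset.mem_compl.1 ha), frobNorm_idm hd]), Finset.prod_const,
      Finset.card_compl, Fintype.card_fin]

lemma tensorPow_add_expand {d t : ℕ} (Γ : Matrix (Fin d) (Fin d) ℂ) :
    tensorPowMatrix d t (((d : ℂ))⁻¹ • (1 : Matrix (Fin d) (Fin d) ℂ) + Γ)
      = ∑ S : Finset (Fin t), termS d t Γ S := by
  ext v w
  have hentry : ∀ a : Fin t,
      ((((d : ℂ))⁻¹ • (1 : Matrix (Fin d) (Fin d) ℂ)) + Γ) (v a) (w a)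
      = Γ (v a) (w a) + ((d : ℂ))⁻¹ * (if v a = w a then 1 else 0) := by
    intro a
    simp [Matrix.add_apply, Matrix.smul_apply, Matrix.one_apply, smul_eq_mul, add_comm]
  show (∏ a, ((((d : ℂ))⁻¹ • (1 : Matrix (Fin d) (Fin d) ℂ)) + Γ) (v a) (w a))
    = (∑ S : Finset (Fin t), termS d t Γ S) v w
  rw [Matrix.sum_apply, Finset.prod_congr rfl (fun a _ => hentry a), Fintype.prod_add]
  rfl

lemma termS_empty {d t : ℕ} (Γ : Matrix (Fin d) (Fin d) ℂ) :
    termS d t Γ (∅ : Finset (Fin t))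
      = tensorPowMatrix d t (((d : ℂ))⁻¹ • (1 : Matrix (Fin d) (Fin d) ℂ)) := by
  ext v w
  show (∏ a ∈ (∅ : Finset (Fin t)), Γ (v a) (w a)) *
      ∏ a ∈ (∅ : Finset (Fin t))ᶜ, ((d:ℂ))⁻¹ * (if v a = w a then 1 else 0)
    = ∏ a, (((d : ℂ))⁻¹ • (1 : Matrix (Fin d) (Fin d) ℂ)) (v a) (w a)
  rw [Finset.prod_empty, one_mul, Finset.compl_empty]
  exact Finset.prod_congr rfl fun a _ => by
    simp [Matrix.smul_apply, Matrix.one_apply, smul_eq_mul]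

lemma termS_singleton {d t : ℕ} (Γ : Matrix (Fin d) (Fin d) ℂ) (i : Fin t) :
    termS d t Γ {i} = embedAt d t i Γ := by
  ext v w
  show (∏ a ∈ ({i} : Finset (Fin t)), Γ (v a) (w a)) *
      ∏ a ∈ ({i} : Finset (Fin t))ᶜ, ((d:ℂ))⁻¹ * (if v a = w a then 1 else 0)
    = Γ (v i) (w i) * ∏ a ∈ Finset.univ.erase i, ((d:ℂ))⁻¹ * (if v a = w a then 1 else 0)
  rw [Finset.prod_singleton, Finset.compl_singleton]

lemma highPart_eq {d t : ℕ} (Γ : Matrix (Fin d) (Fin d) ℂ) :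
    highPart d t Γ
      = ∑ S ∈ Finset.univ.filter (fun S : Finset (Fin t) => 2 ≤ S.card),
          termS d t Γ S := by
  have hsplit : ∑ S : Finset (Fin t), termS d t Γ S
      = (∑ S ∈ Finset.univ.filter (fun S : Finset (Fin t) => 2 ≤ S.card), termS d t Γ S)
        + (termS d t Γ ∅ + ∑ i : Fin t, termS d t Γ {i}) := by
    rw [← Finset.sum_filter_add_sum_filter_not Finset.univ
      (fun S : Finset (Fin t) => 2 ≤ S.card) (termS d t Γ)]
    congr 1
    have hset : Finset.univ.filter (fun S : Finset (Fin t) => ¬ 2 ≤ S.card)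
        = insert (∅ : Finset (Fin t)) (Finset.univ.image fun i : Fin t => {i}) := by
      ext S
      simp only [Finset.mem_filter, Finset.mem_univ, true_and, Finset.mem_insert,
        Finset.mem_image]
      have h01 : ¬ 2 ≤ S.card ↔ S.card = 0 ∨ S.card = 1 := by omega
      rw [h01, Finset.card_eq_zero, Finset.card_eq_one]
      simp [eq_comm]
    rw [hset, Finset.sum_insert (by simp),
      Finset.sum_image (fun i _ j _ h => Finset.singleton_injective h)]
  have hsing : ∑ i : Fin t, termS d t Γ {i} = linPart d t Γ :=
    Finset.sum_congr rfl fun i _ => termS_singleton Γ i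
  rw [highPart, tensorPow_add_expand, hsplit, termS_empty, hsing]
  abel

lemma sum_eps_card {t : ℕ} {x : ℝ} (hx : 0 ≤ x) (h : (t:ℝ) * x ≤ 1/2) :
    ∑ S ∈ Finset.univ.filter (fun S : Finset (Fin t) => 2 ≤ S.card), x ^ S.card
      ≤ 2 * (t:ℝ)^2 * x^2 := by
  set y := (t:ℝ) * x with hy
  have hy0 : 0 ≤ y := mul_nonneg (Nat.cast_nonneg t) hx
  calc ∑ S ∈ Finset.univ.filter (fun S : Finset (Fin t) => 2 ≤ S.card), x ^ S.card
      = ∑ S ∈ (Finset.univ : Finset (Finset (Fin t))),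
          (if 2 ≤ S.card then x ^ S.card else 0) := Finset.sum_filter _ _
    _ = ∑ j ∈ Finset.range (t+1), ∑ S ∈ Finset.powersetCard j (Finset.univ : Finset (Fin t)),
          (if 2 ≤ S.card then x ^ S.card else 0) := by
        rw [← Finset.powerset_univ, Finset.sum_powerset, Finset.card_univ, Fintype.card_fin]
    _ = ∑ j ∈ Finset.range (t+1), (Nat.choose t j : ℝ) * (if 2 ≤ j then x ^ j else 0) := by
        refine Finset.sum_congr rfl fun j _ => ?_
        rw [Finset.sum_congr rfl (fun S hS => by
          rw [(Finset.mem_powersetCard.1 hS).2]), Finset.sum_const,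
          Finset.card_powersetCard, Finset.card_univ, Fintype.card_fin, nsmul_eq_mul]
    _ ≤ ∑ j ∈ Finset.range (t+1), (if 2 ≤ j then y ^ j else 0) := by
        refine Finset.sum_le_sum fun j _ => ?_
        by_cases h2 : 2 ≤ j
        · simp only [if_pos h2]
          rw [hy, mul_pow]
          refine mul_le_mul_of_nonneg_right ?_ (pow_nonneg hx j)
          exact_mod_cast Nat.choose_le_pow t j
        · simp [h2]
    _ = ∑ j ∈ Finset.Ico 2 (t+1), y ^ j := by
        rw [← Finset.sum_filter]
        refine Finset.sum_congr ?_ fun _ _ => rfl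
        ext j
        simp only [Finset.mem_filter, Finset.mem_range, Finset.mem_Ico]
        omega
    _ = ∑ i ∈ Finset.range (t+1-2), y ^ (2+i) := Finset.sum_Ico_eq_sum_range _ _ _
    _ = y^2 * ∑ i ∈ Finset.range (t-1), y ^ i := by
        rw [Finset.mul_sum]
        have : t + 1 - 2 = t - 1 := by omega
        rw [this]
        exact Finset.sum_congr rfl fun i _ => by rw [pow_add]
    _ ≤ y^2 * 2 := by
        refine mul_le_mul_of_nonneg_left ?_ (sq_nonneg y)
        calc ∑ i ∈ Finset.range (t-1), y^i
            ≤ ∑ i ∈ Finset.range (t-1), (1/2:ℝ)^i :=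
              Finset.sum_le_sum fun i _ => pow_le_pow_left₀ hy0 h i
          _ ≤ 2 := by
              rw [geom_sum_eq (by norm_num : (1/2:ℝ) ≠ 1)]
              rw [div_le_iff_of_neg (by norm_num : (1/2:ℝ) - 1 < 0)]
              have : (0:ℝ) ≤ (1/2:ℝ)^(t-1) := by positivity
              nlinarith
    _ = 2 * (t:ℝ)^2 * x^2 := by rw [hy, mul_pow]; ring
end AuxHOL

/-- There is a universal constant `C > 0` such that for `tε ≤ 1/2`,
Hermitian `Δ, Δ'` with `‖Δ‖_F, ‖Δ'‖_F ≤ ε/√d`, and a Frobenius-contractive linear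
map `𝓗`, the higher-order contributions satisfy
`|tr(L_Δ 𝓗(H_{Δ'}))| + |tr(H_Δ 𝓗(L_{Δ'}))| + |tr(H_Δ 𝓗(H_{Δ'}))| ≤ C t³ ε³ / d^t`. -/
theorem higher_order_linearization_bound :
    ∃ C : ℝ, 0 < C ∧
      ∀ (d t : ℕ), 1 ≤ d → 1 ≤ t →
      ∀ (ε : ℝ), 0 < ε → (t : ℝ) * ε ≤ 1 / 2 →
      ∀ (Δ Δ' : Matrix (Fin d) (Fin d) ℂ),
        Δ.IsHermitian → Δ'.IsHermitian →
        frobNorm Δ ≤ ε / Real.sqrt d → frobNorm Δ' ≤ ε / Real.sqrt d →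
      ∀ (H : Matrix (Fin t → Fin d) (Fin t → Fin d) ℂ →ₗ[ℂ]
              Matrix (Fin t → Fin d) (Fin t → Fin d) ℂ),
        (∀ X, frobNorm (H X) ≤ frobNorm X) →
        ‖(linPart d t Δ * H (highPart d t Δ')).trace‖ +
          ‖(highPart d t Δ * H (linPart d t Δ')).trace‖ +
          ‖(highPart d t Δ * H (highPart d t Δ')).trace‖
        ≤ C * (t : ℝ) ^ 3 * ε ^ 3 / (d : ℝ) ^ t := by
  refine ⟨6, by norm_num, ?_⟩
  intro d t hd ht ε hε htε Δ Δ' _hΔ _hΔ' hΔn hΔ'n H hH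
  set s := Real.sqrt d with hs_def
  have hd1 : (1:ℝ) ≤ (d:ℝ) := by exact_mod_cast hd
  have hs0 : 0 < s := Real.sqrt_pos.2 (by linarith)
  have hst : 0 < s ^ t := pow_pos hs0 t
  have hdt : (0:ℝ) < (d:ℝ)^t := by positivity
  have htp : (0:ℝ) < (t:ℝ) := by exact_mod_cast ht
  have hsplitpow : ∀ k : ℕ, k ≤ t → (ε / s)^k * (s⁻¹)^(t-k) = ε^k / s^t := by
    intro k hk
    rw [div_pow, div_eq_mul_inv (ε^k), ← inv_pow, mul_assoc, ← pow_add,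
      show k + (t-k) = t by omega, inv_pow, ← div_eq_mul_inv]
  -- linear part bound
  have hL : ∀ Γ : Matrix (Fin d) (Fin d) ℂ, frobNorm Γ ≤ ε / s →
      frobNorm (linPart d t Γ) ≤ (t:ℝ) * ε / s ^ t := by
    intro Γ hΓ
    have h2 : ∀ i : Fin t, frobNorm (embedAt d t i Γ) ≤ ε / s ^ t := by
      intro i
      rw [frobNorm_embedAt hd i Γ]
      calc frobNorm Γ * (s⁻¹)^(t-1)
          ≤ (ε/s) * (s⁻¹)^(t-1) := mul_le_mul_of_nonneg_right hΓ (by positivity)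
        _ = ε / s ^ t := by
            have := hsplitpow 1 ht
            rwa [pow_one, pow_one] at this
    calc frobNorm (linPart d t Γ) ≤ ∑ i : Fin t, frobNorm (embedAt d t i Γ) :=
        frobNorm_sum_le _ _
      _ ≤ ∑ _i : Fin t, ε / s ^ t := Finset.sum_le_sum fun i _ => h2 i
      _ = (t:ℝ) * ε / s ^ t := by
          rw [Finset.sum_const, Finset.card_univ, Fintype.card_fin, nsmul_eq_mul]
          ring
  -- higher-order part bound
  have hHb : ∀ Γ : Matrix (Fin d) (Fin d) ℂ, frobNorm Γ ≤ ε / s →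
      frobNorm (highPart d t Γ) ≤ 2 * (t:ℝ)^2 * ε^2 / s ^ t := by
    intro Γ hΓ
    rw [highPart_eq]
    refine (frobNorm_sum_le _ _).trans ?_
    have hterm : ∀ S ∈ Finset.univ.filter (fun S : Finset (Fin t) => 2 ≤ S.card),
        frobNorm (termS d t Γ S) ≤ ε ^ S.card / s ^ t := by
      intro S _
      rw [frobNorm_termS hd]
      have hcard : S.card ≤ t := by
        simpa using Finset.card_le_univ S
      calc frobNorm Γ ^ S.card * (s⁻¹)^(t - S.card)
          ≤ (ε/s) ^ S.card * (s⁻¹)^(t - S.card) :=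
            mul_le_mul_of_nonneg_right
              (pow_le_pow_left₀ (frobNorm_nonneg Γ) hΓ _) (by positivity)
        _ = ε ^ S.card / s ^ t := hsplitpow _ hcard
    refine (Finset.sum_le_sum hterm).trans ?_
    rw [← Finset.sum_div]
    rw [div_le_div_iff₀ hst hst]
    have hkey := sum_eps_card (t := t) hε.le htε
    calc (∑ S ∈ Finset.univ.filter (fun S : Finset (Fin t) => 2 ≤ S.card), ε ^ S.card) * s^t
        ≤ (2 * (t:ℝ)^2 * ε^2) * s^t :=
          mul_le_mul_of_nonneg_right hkey hst.le
      _ = 2 * (t:ℝ)^2 * ε^2 * s^t := rfl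
  have hLd := hL Δ hΔn
  have hL' := hL Δ' hΔ'n
  have hHd := hHb Δ hΔn
  have hH' := hHb Δ' hΔ'n
  have hLnn : (0:ℝ) ≤ (t:ℝ) * ε / s^t := by positivity
  have hHnn : (0:ℝ) ≤ 2 * (t:ℝ)^2 * ε^2 / s^t := by positivity
  have T1 : ‖(linPart d t Δ * H (highPart d t Δ')).trace‖
      ≤ ((t:ℝ)*ε/s^t) * (2*(t:ℝ)^2*ε^2/s^t) :=
    (abs_trace_mul_le _ _).trans
      (mul_le_mul hLd ((hH _).trans hH') (frobNorm_nonneg _) hLnn)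
  have T2 : ‖(highPart d t Δ * H (linPart d t Δ')).trace‖
      ≤ (2*(t:ℝ)^2*ε^2/s^t) * ((t:ℝ)*ε/s^t) :=
    (abs_trace_mul_le _ _).trans
      (mul_le_mul hHd ((hH _).trans hL') (frobNorm_nonneg _) hHnn)
  have T3 : ‖(highPart d t Δ * H (highPart d t Δ')).trace‖
      ≤ (2*(t:ℝ)^2*ε^2/s^t) * (2*(t:ℝ)^2*ε^2/s^t) :=
    (abs_trace_mul_le _ _).trans
      (mul_le_mul hHd ((hH _).trans hH') (frobNorm_nonneg _) hHnn)
  have hss : s^t * s^t = (d:ℝ)^t := by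
    rw [← mul_pow, Real.mul_self_sqrt (by linarith)]
  have hA : ((t:ℝ)*ε/s^t) * (2*(t:ℝ)^2*ε^2/s^t) = 2*(t:ℝ)^3*ε^3/(d:ℝ)^t := by
    rw [div_mul_div_comm, hss]
    congr 1
    ring
  have hB : (2*(t:ℝ)^2*ε^2/s^t) * ((t:ℝ)*ε/s^t) = 2*(t:ℝ)^3*ε^3/(d:ℝ)^t := by
    rw [div_mul_div_comm, hss]
    congr 1
    ring
  have hC : (2*(t:ℝ)^2*ε^2/s^t) * (2*(t:ℝ)^2*ε^2/s^t) ≤ 2*(t:ℝ)^3*ε^3/(d:ℝ)^t := by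
    rw [div_mul_div_comm, hss, div_le_div_iff₀ hdt hdt]
    have hx : (0:ℝ) ≤ (t:ℝ)*ε := by positivity
    have h3 : (0:ℝ) ≤ ((t:ℝ)*ε)^3 := by positivity
    have hmul := mul_le_mul_of_nonneg_right htε h3
    nlinarith [hdt.le, mul_pos hdt hdt]
  calc ‖(linPart d t Δ * H (highPart d t Δ')).trace‖ +
        ‖(highPart d t Δ * H (linPart d t Δ')).trace‖ +
        ‖(highPart d t Δ * H (highPart d t Δ')).trace‖
      ≤ ((t:ℝ)*ε/s^t) * (2*(t:ℝ)^2*ε^2/s^t) + (2*(t:ℝ)^2*ε^2/s^t) * ((t:ℝ)*ε/s^t)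
        + (2*(t:ℝ)^2*ε^2/s^t) * (2*(t:ℝ)^2*ε^2/s^t) :=
        add_le_add (add_le_add T1 T2) T3
    _ ≤ 2*(t:ℝ)^3*ε^3/(d:ℝ)^t + 2*(t:ℝ)^3*ε^3/(d:ℝ)^t + 2*(t:ℝ)^3*ε^3/(d:ℝ)^t := by
        rw [hA, hB]
        exact add_le_add_right hC _
    _ = 6 * (t:ℝ)^3 * ε^3 / (d:ℝ)^t := by ring
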